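/- For every natural number k ≥ 1, the partial sum ∑_{i=0}^{k-1} c_i equals ∑_{n=1}^∞ μ(n)(1 - (1 - 1/n²)^k) and also equals -∑_{j=1}^k binom(k,j) (-1)^j / ζ(2j), the infinite series converging absolutely. -/
import Mathlib


open ArithmeticFunction

/-- The real value of the Riemann zeta function at a real argument. -/
noncomputable def zetaR (s : ℝ) : ℝ := (riemannZeta (s : ℂ)).re

/-- The Báez-Duarte sequence `c_k = ∑_{j=0}^k (-1)^j C(k,j) / ζ(2j+2)`. -/
noncomputable def cBD (k : ℕ) : ℝ :=
  ∑ j ∈ Finset.range (k + 1), (-1 : ℝ) ^ j * (k.choose j) / zetaR (2 * j + 2)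

lemma zeta_real' {s : ℝ} (hs : 1 < s) : riemannZeta (s : ℂ) = ((zetaR s : ℝ) : ℂ) := by
  have hs' : 1 < (s : ℂ).re := by simpa using hs
  have hsum : HasSum (fun n => LSeries.term 1 (s : ℂ) n) (riemannZeta (s : ℂ)) :=
    LSeriesHasSum_one hs'
  have him := Complex.hasSum_im hsum
  have h0 : (fun n => (LSeries.term 1 (s : ℂ) n).im) = fun _ => (0 : ℝ) := by
    funext n
    rcases eq_or_ne n 0 with rfl | hn
    · simp
    · rw [LSeries.term_of_ne_zero hn]
      have : ((n : ℂ)) ^ (s : ℂ) = (((n : ℝ) ^ s : ℝ) : ℂ) := by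
        rw [Complex.ofReal_cpow (by positivity)]
        push_cast; ring_nf
      simp [this, Pi.one_apply, ← Complex.ofReal_one, ← Complex.ofReal_div]
  rw [h0] at him
  have him0 : (riemannZeta (s : ℂ)).im = 0 := him.unique hasSum_zero
  apply Complex.ext
  · simp [zetaR]
  · simp [him0]

lemma moebius_hasSum' {j : ℕ} (hj : 1 ≤ j) :
    HasSum (fun n : ℕ => ((moebius (n + 1) : ℤ) : ℝ) * (1 / ((n : ℝ) + 1) ^ 2) ^ j)
      (zetaR (2 * j))⁻¹ := by
  set s : ℂ := ((2 * j : ℕ) : ℂ) with hsdef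
  have hs : 1 < s.re := by
    simp only [hsdef, Complex.natCast_re]
    exact_mod_cast Nat.lt_of_lt_of_le Nat.one_lt_two (by omega : 2 ≤ 2 * j)
  have hmul := LSeries_one_mul_Lseries_moebius hs
  rw [LSeries_one_eq_riemannZeta hs] at hmul
  have hL : LSeries (fun n => ((moebius n : ℤ) : ℂ)) s = (riemannZeta s)⁻¹ :=
    eq_inv_of_mul_eq_one_left (mul_comm (riemannZeta s) _ ▸ hmul)
  have hz : riemannZeta s = ((zetaR (2 * (j : ℝ)) : ℝ) : ℂ) := by
    have h2 : ((2 * j : ℕ) : ℝ) = 2 * (j : ℝ) := by push_cast; ring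
    have := zeta_real' (s := ((2 * j : ℕ) : ℝ))
      (by exact_mod_cast Nat.lt_of_lt_of_le Nat.one_lt_two (by omega : 2 ≤ 2 * j))
    rw [h2] at this
    rw [hsdef, ← this]
    norm_num
  have hsum : HasSum (fun n => LSeries.term (fun n => ((moebius n : ℤ) : ℂ)) s n)
      (((zetaR (2 * (j : ℝ)))⁻¹ : ℝ) : ℂ) := by
    have h1 : LSeries (fun n => ((moebius n : ℤ) : ℂ)) s
        = (((zetaR (2 * (j : ℝ)))⁻¹ : ℝ) : ℂ) := by
      rw [hL, hz, ← Complex.ofReal_inv]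
    rw [← h1]
    exact (LSeriesSummable_moebius_iff.mpr hs).hasSum
  have hshift := (hasSum_nat_add_iff' 1).mpr hsum
  simp only [Finset.range_one, Finset.sum_singleton, LSeries.term_zero, sub_zero] at hshift
  have hre := Complex.hasSum_re hshift
  simp only [Complex.ofReal_re] at hre
  refine hre.congr_fun fun n => ?_
  rw [LSeries.term_of_ne_zero (Nat.succ_ne_zero n)]
  have hpow : ((n + 1 : ℕ) : ℂ) ^ s = ((((n : ℝ) + 1) ^ (2 * j) : ℝ) : ℂ) := by
    rw [hsdef, Complex.cpow_natCast]
    push_cast; ring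
  rw [hpow]
  have : (((moebius (n + 1) : ℤ) : ℂ)) = ((((moebius (n + 1) : ℤ) : ℝ)) : ℂ) := by
    push_cast; rfl
  rw [this, ← Complex.ofReal_div, Complex.ofReal_re]
  rw [one_div, inv_pow, ← pow_mul, div_eq_mul_inv]

lemma sum_cBD (k : ℕ) : ∑ i ∈ Finset.range k, cBD i =
    ∑ j ∈ Finset.range k, (-1 : ℝ) ^ j * (k.choose (j + 1)) / zetaR (2 * j + 2) := by
  induction k with
  | zero => simp
  | succ k ih =>
    rw [Finset.sum_range_succ, ih, cBD]
    have h1 : ∑ j ∈ Finset.range k, (-1 : ℝ) ^ j * (k.choose (j + 1)) / zetaR (2 * j + 2)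
        = ∑ j ∈ Finset.range (k + 1), (-1 : ℝ) ^ j * (k.choose (j + 1)) / zetaR (2 * j + 2) := by
      rw [Finset.sum_range_succ, Nat.choose_succ_self]
      norm_num
    rw [h1, ← Finset.sum_add_distrib]
    refine Finset.sum_congr rfl fun j hj => ?_
    rw [Nat.choose_succ_succ]
    push_cast
    ring

set_option maxHeartbeats 1000000 in
theorem stmt19 (k : ℕ) (hk : 1 ≤ k) :
    Summable (fun n : ℕ =>
      |((moebius (n + 1) : ℤ) : ℝ) * (1 - (1 - 1 / ((n : ℝ) + 1) ^ 2) ^ k)|) ∧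
    ∑ i ∈ Finset.range k, cBD i =
      ∑' n : ℕ, ((moebius (n + 1) : ℤ) : ℝ) * (1 - (1 - 1 / ((n : ℝ) + 1) ^ 2) ^ k) ∧
    ∑ i ∈ Finset.range k, cBD i =
      -∑ j ∈ Finset.Icc 1 k, (k.choose j : ℝ) * (-1 : ℝ) ^ j / zetaR (2 * j) := by
  have hx0 : ∀ n : ℕ, 0 < 1 / ((n : ℝ) + 1) ^ 2 := fun n => by positivity
  have hx1 : ∀ n : ℕ, 1 / ((n : ℝ) + 1) ^ 2 ≤ 1 := by
    intro n
    rw [div_le_one (by positivity)]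
    nlinarith [Nat.cast_nonneg (α := ℝ) n]
  -- the family of HasSums
  have H : ∀ j ∈ Finset.range k,
      HasSum (fun n : ℕ => ((k.choose (j + 1) : ℝ) * (-1 : ℝ) ^ j) *
          (((moebius (n + 1) : ℤ) : ℝ) * (1 / ((n : ℝ) + 1) ^ 2) ^ (j + 1)))
        (((k.choose (j + 1) : ℝ) * (-1 : ℝ) ^ j) * (zetaR (2 * (j : ℝ) + 2))⁻¹) := by
    intro j _
    have h := (moebius_hasSum' (j := j + 1) (Nat.le_add_left 1 j)).mul_left
      ((k.choose (j + 1) : ℝ) * (-1 : ℝ) ^ j)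
    have harg : 2 * ((j + 1 : ℕ) : ℝ) = 2 * (j : ℝ) + 2 := by push_cast; ring
    rwa [harg] at h
  have Hsum := hasSum_sum H
  -- pointwise identity
  have hpt : ∀ n : ℕ, ((moebius (n + 1) : ℤ) : ℝ) * (1 - (1 - 1 / ((n : ℝ) + 1) ^ 2) ^ k)
      = ∑ j ∈ Finset.range k, ((k.choose (j + 1) : ℝ) * (-1 : ℝ) ^ j) *
          (((moebius (n + 1) : ℤ) : ℝ) * (1 / ((n : ℝ) + 1) ^ 2) ^ (j + 1)) := by
    intro n
    set x : ℝ := 1 / ((n : ℝ) + 1) ^ 2 with hxdef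
    have hbin : (1 - x) ^ k = ∑ j ∈ Finset.range (k + 1), (-x) ^ j * (k.choose j : ℝ) := by
      rw [sub_eq_add_neg, add_comm, add_pow]
      exact Finset.sum_congr rfl fun j _ => by rw [one_pow, mul_one]
    rw [hbin, Finset.sum_range_succ']
    simp only [pow_zero, Nat.choose_zero_right, Nat.cast_one, one_mul]
    have : (1 : ℝ) - (∑ j ∈ Finset.range k, (-x) ^ (j + 1) * ((k.choose (j + 1) : ℝ)) + 1)
        = ∑ j ∈ Finset.range k, -((-x) ^ (j + 1) * (k.choose (j + 1) : ℝ)) := by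
      rw [Finset.sum_neg_distrib]; ring
    rw [this, Finset.mul_sum]
    refine Finset.sum_congr rfl fun j _ => ?_
    rw [neg_pow x]
    ring
  have HsumF : HasSum
      (fun n : ℕ => ((moebius (n + 1) : ℤ) : ℝ) * (1 - (1 - 1 / ((n : ℝ) + 1) ^ 2) ^ k))
      (∑ j ∈ Finset.range k,
        ((k.choose (j + 1) : ℝ) * (-1 : ℝ) ^ j) * (zetaR (2 * (j : ℝ) + 2))⁻¹) :=
    Hsum.congr_fun fun n => hpt n
  refine ⟨?_, ?_, ?_⟩
  · -- summability of absolute values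
    have hbound : ∀ n : ℕ,
        |((moebius (n + 1) : ℤ) : ℝ) * (1 - (1 - 1 / ((n : ℝ) + 1) ^ 2) ^ k)|
          ≤ (k : ℝ) * (1 / ((n : ℝ) + 1) ^ 2) := by
      intro n
      set x : ℝ := 1 / ((n : ℝ) + 1) ^ 2 with hxdef
      have hx0' := hx0 n
      have hx1' := hx1 n
      have hm : |((moebius (n + 1) : ℤ) : ℝ)| ≤ 1 := by
        exact_mod_cast abs_moebius_le_one (n := n + 1)
      have ht0 : 0 ≤ 1 - (1 - x) ^ k :=
        sub_nonneg.mpr (pow_le_one₀ (by linarith) (by linarith))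
      have ht : 1 - (1 - x) ^ k ≤ (k : ℝ) * x := by
        have h2 : (1 : ℝ) + (k : ℝ) * (-x) ≤ (1 + -x) ^ k :=
          one_add_mul_le_pow (by linarith) k
        have h3 : (1 + -x : ℝ) = 1 - x := by ring
        rw [h3] at h2
        linarith
      calc |((moebius (n + 1) : ℤ) : ℝ) * (1 - (1 - x) ^ k)|
          = |((moebius (n + 1) : ℤ) : ℝ)| * |1 - (1 - x) ^ k| := abs_mul _ _
        _ ≤ 1 * |1 - (1 - x) ^ k| := by
            exact mul_le_mul_of_nonneg_right hm (abs_nonneg _)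
        _ = 1 - (1 - x) ^ k := by rw [one_mul, abs_of_nonneg ht0]
        _ ≤ (k : ℝ) * x := ht
    have hsummable : Summable (fun n : ℕ => (k : ℝ) * (1 / ((n : ℝ) + 1) ^ 2)) := by
      have h1 : Summable (fun n : ℕ => 1 / (n : ℝ) ^ 2) :=
        Real.summable_one_div_nat_pow.mpr (by norm_num)
      have h2 : Summable (fun n : ℕ => 1 / ((n + 1 : ℕ) : ℝ) ^ 2) :=
        (summable_nat_add_iff 1).mpr h1
      have h3 : Summable (fun n : ℕ => 1 / ((n : ℝ) + 1) ^ 2) := by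
        refine h2.congr fun n => ?_
        push_cast; ring
      exact h3.mul_left _
    exact Summable.of_nonneg_of_le (fun n => abs_nonneg _) hbound hsummable
  · -- equals the tsum
    rw [sum_cBD k, HsumF.tsum_eq]
    refine Finset.sum_congr rfl fun j _ => ?_
    rw [div_eq_mul_inv]
    ring
  · -- equals the finite signed sum
    rw [sum_cBD k, show Finset.Icc 1 k = Finset.Ico 1 (k + 1) from (Finset.Ico_add_one_right_eq_Icc 1 k).symm,
      Finset.sum_Ico_eq_sum_range]
    simp only [Nat.add_sub_cancel]
    rw [← Finset.sum_neg_distrib]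
    refine Finset.sum_congr rfl fun j _ => ?_
    rw [show 1 + j = j + 1 from Nat.add_comm 1 j]
    push_cast
    rw [show (2 : ℝ) * ((j : ℝ) + 1) = 2 * (j : ℝ) + 2 by ring]
    ring
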